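/- arXiv:1310.3438 — 4 statements merged into one kernel-verified Lean document; each statement's English description precedes it below -/
import Mathlib

section
/- Let w, v ∈ ℝ^n be positive vectors and s > 0. Over all vectors p' ∈ ℝ^n with p' ≥ 0 and ∑_i p'_i = s, the minimum of max_i w_i/(p'_i v_i) equals (1/s)·∑_i w_i/v_i, and it is attained at p'_i proportional to w_i/v_i (namely p'_i = s·(w_i/v_i)/∑_j (w_j/v_j)). -/
/-!
Write `a i = w i / v i`, so the objective is `max_i a i / p' i`. If `M` is that maximum then
`a i ≤ M p' i` for every `i`, and summing gives `∑ a ≤ M s`. The proportional choice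
`p' = s a / ∑ a` makes every ratio `a i / p' i` equal to `(∑ a) / s`, so the bound is attained.
-/

open Finset

theorem Finset.sum_le_sup'_div_mul_sum {ι : Type*} (t : Finset ι) (ht : t.Nonempty)
    (a p : ι → ℝ) (hp : ∀ i ∈ t, 0 < p i) :
    ∑ i ∈ t, a i ≤ t.sup' ht (fun i => a i / p i) * ∑ i ∈ t, p i := by
  rw [mul_sum]
  refine sum_le_sum fun i hi => ?_
  exact (div_le_iff₀ (hp i hi)).mp (le_sup' (fun i => a i / p i) hi)

theorem Finset.sum_mul_div_sum {ι : Type*} (t : Finset ι) (a : ι → ℝ) (s : ℝ)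
    (ha : ∑ j ∈ t, a j ≠ 0) :
    ∑ i ∈ t, s * a i / ∑ j ∈ t, a j = s := by
  rw [← sum_div, ← mul_sum, mul_div_cancel_right₀ _ ha]

/-- over {p' ≥ 0, ∑ p'_i = s}, the minimum of max_i w_i/(p'_i v_i)
equals (1/s)·∑_i w_i/v_i, attained at p'_i = s·(w_i/v_i)/∑_j (w_j/v_j).
(For p' with a zero entry the objective is +∞ by convention, so the lower bound
is quantified over strictly positive feasible p'.) -/
theorem nsync_optimal_probabilities
    (n : ℕ) (hn : 0 < n) (w v : Fin n → ℝ)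
    (hw : ∀ i, 0 < w i) (hv : ∀ i, 0 < v i)
    (s : ℝ) (hs : 0 < s)
    (pstar : Fin n → ℝ)
    (hpstar : ∀ i, pstar i = s * (w i / v i) / ∑ j, w j / v j) :
    (∀ i, 0 ≤ pstar i) ∧ (∑ i, pstar i = s) ∧
    (Finset.univ.sup' (Finset.univ_nonempty_iff.mpr ⟨⟨0, hn⟩⟩)
        (fun i => w i / (pstar i * v i)) = (1 / s) * ∑ i, w i / v i) ∧
    (∀ p' : Fin n → ℝ, (∀ i, 0 < p' i) → (∑ i, p' i = s) →
      (1 / s) * ∑ i, w i / v i ≤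
        Finset.univ.sup' (Finset.univ_nonempty_iff.mpr ⟨⟨0, hn⟩⟩)
          (fun i => w i / (p' i * v i))) := by
  set a : Fin n → ℝ := fun i => w i / v i
  have ha (i : Fin n) : 0 < a i := div_pos (hw i) (hv i)
  have hne : (univ : Finset (Fin n)).Nonempty := univ_nonempty_iff.mpr ⟨⟨0, hn⟩⟩
  have hT : 0 < ∑ j, a j := sum_pos (fun j _ => ha j) hne
  have hobjective (p : Fin n → ℝ) : (fun i => w i / (p i * v i)) = fun i => a i / p i :=
    funext fun i => div_mul_eq_div_div_swap (w i) (p i) (v i)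
  have hpstar' (i : Fin n) : pstar i = s * a i / ∑ j, a j := hpstar i
  have hratio (i : Fin n) : a i / pstar i = (∑ j, a j) / s := by
    rw [hpstar' i]
    field_simp [(ha i).ne']
  refine ⟨fun i => ?_, ?_, ?_, fun p' hp' hsum => ?_⟩
  · rw [hpstar' i]
    exact div_nonneg (mul_nonneg hs.le (ha i).le) hT.le
  · rw [Fintype.sum_congr _ _ hpstar']
    exact sum_mul_div_sum univ a s hT.ne'
  · rw [hobjective, funext hratio, one_div_mul_eq_div]
    exact sup'_const hne _
  · rw [hobjective, one_div_mul_eq_div, div_le_iff₀ hs, ← hsum]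
    exact sum_le_sup'_div_mul_sum univ hne a p' fun i _ => hp' i
end

section
/- Let φ : ℝ^n → ℝ be differentiable with minimum φ*, let Ŝ be a random subset of [n] with marginals p_i > 0, and let w ∈ ℝ^n be positive. Assume the ESO inequality E[φ(x + h_[Ŝ])] ≤ φ(x) + ∑_i p_i ∇_i φ(x) h_i + (1/2)∑_i p_i w_i h_i² holds for all x, h, and that φ is γ-strongly convex with respect to ‖·‖_v with v > 0. Let Λ = max_i w_i/(p_i v_i) and μ = γ/Λ. Then for the NSync iterates x^{k+1} = x^k − ∑_{i ∈ Ŝ_k} (1/w_i) ∇_i φ(x^k) e^i (with Ŝ_k i.i.d. copies of Ŝ), one has E[φ(x^{k+1}) − φ* | x^k] ≤ (1 − μ)(φ(x^k) − φ*). -/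
/-!
Minimising the strong-convexity lower bound coordinatewise (completing the square) bounds the
residual `φ x - φ*` by `∑ gᵢ² / (2γvᵢ)`, where `g` is the gradient at `x`. Plugging the NSync step
`hᵢ = -gᵢ / wᵢ` into the ESO decreases `φ` in expectation by `½ ∑ (pᵢ / wᵢ) gᵢ²`, and
`wᵢ ≤ Λ pᵢ vᵢ` makes this decrease at least `μ` times the bound on the residual.
-/
open Finset

section

variable {ι : Type*} [Fintype ι]

theorem ContinuousLinearMap.apply_eq_sum_mul_apply_single [DecidableEq ι]
    (L : (ι → ℝ) →L[ℝ] ℝ) (h : ι → ℝ) : L h = ∑ i, h i * L (Pi.single i 1) := by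
  conv_lhs => rw [← univ_sum_single h]
  refine (map_sum L _ _).trans (sum_congr rfl fun i _ => ?_)
  rw [← smul_eq_mul, ← map_smul, ← Pi.single_smul', smul_eq_mul, mul_one]

theorem neg_sq_div_le_mul_add_mul_sq {a : ℝ} (ha : 0 < a) (g d : ℝ) :
    -(g ^ 2 / (2 * a)) ≤ d * g + a / 2 * d ^ 2 := by
  have key : -(g ^ 2 / (2 * a)) = d * g + a / 2 * d ^ 2 - (a * d + g) ^ 2 / (2 * a) := by
    field_simp
    ring
  rw [key]
  have : 0 ≤ (a * d + g) ^ 2 / (2 * a) := by positivity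
  linarith

theorem sub_le_sum_sq_div_of_strongConvex [DecidableEq ι] {φ : (ι → ℝ) → ℝ} {γ : ℝ}
    {v : ι → ℝ} (hγ : 0 < γ) (hv : ∀ i, 0 < v i)
    (hsc : ∀ x h : ι → ℝ, φ (x + h) ≥ φ x + fderiv ℝ φ x h + γ / 2 * ∑ i, v i * h i ^ 2)
    (x y : ι → ℝ) :
    φ x - φ y ≤ ∑ i, fderiv ℝ φ x (Pi.single i 1) ^ 2 / (2 * γ * v i) := by
  have hy := hsc x (y - x)
  rw [add_sub_cancel, (fderiv ℝ φ x).apply_eq_sum_mul_apply_single, mul_sum] at hy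
  have hsq : ∀ i, -(fderiv ℝ φ x (Pi.single i 1) ^ 2 / (2 * γ * v i))
      ≤ (y - x) i * fderiv ℝ φ x (Pi.single i 1) + γ / 2 * (v i * (y - x) i ^ 2) := by
    intro i
    have := neg_sq_div_le_mul_add_mul_sq (mul_pos hγ (hv i)) (fderiv ℝ φ x (Pi.single i 1))
      ((y - x) i)
    rw [← mul_assoc] at this
    linarith
  have := sum_le_sum fun i (_ : i ∈ univ) => hsq i
  simp only [sum_neg_distrib, sum_add_distrib] at this
  linarith

theorem eso_terms_at_scaled_gradient_step {p w g : ι → ℝ} (hw : ∀ i, 0 < w i) :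
    ∑ i, p i * g i * (-(1 / w i) * g i) + 1 / 2 * ∑ i, p i * w i * (-(1 / w i) * g i) ^ 2
      = -(1 / 2 * ∑ i, p i / w i * g i ^ 2) := by
  rw [mul_sum, mul_sum, ← sum_add_distrib, ← sum_neg_distrib]
  refine sum_congr rfl fun i _ => ?_
  field_simp [(hw i).ne']
  ring

theorem div_mul_sum_sq_div_le {γ Λ : ℝ} {p w v g : ι → ℝ} (hγ : 0 < γ)
    (hp : ∀ i, 0 < p i) (hw : ∀ i, 0 < w i) (hv : ∀ i, 0 < v i)
    (hΛ : ∀ i, w i / (p i * v i) ≤ Λ) :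
    γ / Λ * ∑ i, g i ^ 2 / (2 * γ * v i) ≤ 1 / 2 * ∑ i, p i / w i * g i ^ 2 := by
  rw [mul_sum, mul_sum]
  refine sum_le_sum fun i _ => ?_
  have hpv := mul_pos (hp i) (hv i)
  have hΛi : w i ≤ Λ * (p i * v i) := (div_le_iff₀ hpv).mp (hΛ i)
  have hΛpos : 0 < Λ := (div_pos (hw i) hpv).trans_le (hΛ i)
  have hpw : 1 / (Λ * v i) ≤ p i / w i := by
    rw [div_le_div_iff₀ (mul_pos hΛpos (hv i)) (hw i)]
    linarith
  calc γ / Λ * (g i ^ 2 / (2 * γ * v i)) = 1 / 2 * (1 / (Λ * v i) * g i ^ 2) := by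
        field_simp
    _ ≤ 1 / 2 * (p i / w i * g i ^ 2) := by gcongr

theorem sum_mul_sub_of_sum_eq_one {α : Type*} [Fintype α] {P f : α → ℝ} (hP : ∑ a, P a = 1)
    (c : ℝ) : ∑ a, P a * (f a - c) = ∑ a, P a * f a - c := by
  simp only [mul_sub, sum_sub_distrib, ← sum_mul, hP, one_mul]

end

theorem nsync_one_step_contraction_general
    (n : ℕ) (hn : 0 < n)
    (P : Finset (Fin n) → ℝ)
    (hsum : ∑ S : Finset (Fin n), P S = 1)
    (p : Fin n → ℝ)
    (hp : ∀ i, 0 < p i)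
    (w v : Fin n → ℝ) (hw : ∀ i, 0 < w i) (hv : ∀ i, 0 < v i)
    (φ : (Fin n → ℝ) → ℝ)
    (φstar : ℝ) (xstar : Fin n → ℝ)
    (hφstar : φstar = φ xstar)
    (hESO : ∀ x h : Fin n → ℝ,
      (∑ S : Finset (Fin n), P S * φ (x + fun i => if i ∈ S then h i else 0))
        ≤ φ x + (∑ i, p i * fderiv ℝ φ x (Pi.single i 1) * h i)
            + 1 / 2 * ∑ i, (p i * w i) * h i ^ 2)
    (γ : ℝ) (hγ : 0 < γ)
    (hsc : ∀ x h : Fin n → ℝ,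
      φ (x + h) ≥ φ x + fderiv ℝ φ x h + γ / 2 * ∑ i, v i * h i ^ 2)
    (Λ : ℝ)
    (hΛ : Λ = Finset.univ.sup' (Finset.univ_nonempty_iff.mpr ⟨⟨0, hn⟩⟩)
      (fun i => w i / (p i * v i)))
    (μ : ℝ) (hμ : μ = γ / Λ) :
    ∀ x : Fin n → ℝ,
      (∑ S : Finset (Fin n),
          P S * (φ (x + fun i => if i ∈ S then -(1 / w i) * fderiv ℝ φ x (Pi.single i 1) else 0)
                  - φstar))
        ≤ (1 - μ) * (φ x - φstar) := by
  intro x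
  have hΛ_ge : ∀ i, w i / (p i * v i) ≤ Λ := fun i =>
    hΛ ▸ le_sup' (fun i => w i / (p i * v i)) (mem_univ i)
  have hμ_nonneg : 0 ≤ μ := by
    have i₀ : Fin n := ⟨0, hn⟩
    have hΛ_pos : 0 < Λ := (div_pos (hw i₀) (mul_pos (hp i₀) (hv i₀))).trans_le (hΛ_ge i₀)
    exact hμ ▸ div_nonneg hγ.le hΛ_pos.le
  have hdescent := hESO x fun i => -(1 / w i) * fderiv ℝ φ x (Pi.single i 1)
  rw [add_assoc, eso_terms_at_scaled_gradient_step hw] at hdescent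
  have hresidual := hφstar ▸ sub_le_sum_sq_div_of_strongConvex hγ hv hsc x xstar
  have hweights := hμ ▸ div_mul_sum_sq_div_le (g := fun i => fderiv ℝ φ x (Pi.single i 1))
    hγ hp hw hv hΛ_ge
  rw [sum_mul_sub_of_sum_eq_one hsum]
  linarith [mul_le_mul_of_nonneg_left hresidual hμ_nonneg]

/-- one step of NSync, conditionally on the current iterate x,
contracts the expected residual by the factor (1−μ), μ = γ/Λ.
The expectation over the sampling Ŝ is written as a sum over all subsets S
weighted by their probabilities P S; h_[S] is h restricted to S. -/
theorem nsync_one_step_contraction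
    (n : ℕ) (hn : 0 < n)
    (P : Finset (Fin n) → ℝ) (hP : ∀ S, 0 ≤ P S)
    (hsum : ∑ S : Finset (Fin n), P S = 1)
    (p : Fin n → ℝ)
    (hpdef : ∀ i, p i = ∑ S ∈ Finset.univ.filter (fun S : Finset (Fin n) => i ∈ S), P S)
    (hp : ∀ i, 0 < p i)
    (w v : Fin n → ℝ) (hw : ∀ i, 0 < w i) (hv : ∀ i, 0 < v i)
    (φ : (Fin n → ℝ) → ℝ) (hφ : Differentiable ℝ φ)
    (φstar : ℝ) (xstar : Fin n → ℝ) (hmin : ∀ x, φ xstar ≤ φ x)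
    (hφstar : φstar = φ xstar)
    (hESO : ∀ x h : Fin n → ℝ,
      (∑ S : Finset (Fin n), P S * φ (x + fun i => if i ∈ S then h i else 0))
        ≤ φ x + (∑ i, p i * fderiv ℝ φ x (Pi.single i 1) * h i)
            + 1 / 2 * ∑ i, (p i * w i) * h i ^ 2)
    (γ : ℝ) (hγ : 0 < γ)
    (hsc : ∀ x h : Fin n → ℝ,
      φ (x + h) ≥ φ x + fderiv ℝ φ x h + γ / 2 * ∑ i, v i * h i ^ 2)
    (Λ : ℝ)
    (hΛ : Λ = Finset.univ.sup' (Finset.univ_nonempty_iff.mpr ⟨⟨0, hn⟩⟩)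
      (fun i => w i / (p i * v i)))
    (μ : ℝ) (hμ : μ = γ / Λ) :
    ∀ x : Fin n → ℝ,
      (∑ S : Finset (Fin n),
          P S * (φ (x + fun i => if i ∈ S then -(1 / w i) * fderiv ℝ φ x (Pi.single i 1) else 0)
                  - φstar))
        ≤ (1 - μ) * (φ x - φstar) :=
  nsync_one_step_contraction_general n hn P hsum p hp w v hw hv φ φstar xstar hφstar hESO γ hγ hsc Λ
    hΛ μ hμ
end

section
/- Under the assumptions of the previous statement (ESO with parameters p, w; γ-strong convexity w.r.t. ‖·‖_v; Λ = max_i w_i/(p_i v_i)), for any x^0, 0 < ε < φ(x^0) − φ*, and 0 < ρ < 1, if K ≥ (Λ/γ)·log((φ(x^0) − φ*)/(ε ρ)), then Prob(φ(x^K) − φ* ≤ ε) ≥ 1 − ρ, where x^K is the K-th NSync iterate. -/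
/-!
Averaged over the sampling, one NSync step contracts the gap to the optimum. With
`gᵢ = ∂ᵢφ(x)`, the ESO at `h = -g / w` gives `E φ(x⁺) ≤ φ(x) - ½ ∑ pᵢ gᵢ² / wᵢ`, while
strong convexity (minimised coordinatewise over `h`) gives the Polyak–Łojasiewicz bound
`φ(x) - φ* ≤ ∑ gᵢ² / (2γvᵢ) ≤ (Λ / 2γ) ∑ pᵢ gᵢ² / wᵢ`; hence
`E[φ(x⁺) - φ*] ≤ (1 - γ/Λ)(φ(x) - φ*)`. The iterate `x^K` is a function of the history
`(Ŝ₀, …, Ŝ_{K-1})`, whose law is the product of the laws of the `Ŝ_k`, so expectations are finite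
sums over histories and need no measurability of the iterates. Iterating the contraction gives
`E[φ(x^K) - φ*] ≤ (1 - γ/Λ)^K (φ(x⁰) - φ*) ≤ e^{-Kγ/Λ} (φ(x⁰) - φ*) ≤ ερ`, and Markov's
inequality concludes.
-/

open MeasureTheory ProbabilityTheory Finset

section NSyncStep

variable {ι : Type*} [Fintype ι] [DecidableEq ι]

lemma ContinuousLinearMap.apply_eq_sum_mul_single (L : (ι → ℝ) →L[ℝ] ℝ) (h : ι → ℝ) :
    L h = ∑ i, h i * L (Pi.single i 1) := by
  conv_lhs => rw [pi_eq_sum_univ' h]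
  simp only [map_sum, map_smul, smul_eq_mul]

noncomputable def nsyncStep (w : ι → ℝ) (φ : (ι → ℝ) → ℝ) (x : ι → ℝ) (T : Finset ι) : ι → ℝ :=
  x + fun i => if i ∈ T then -(1 / w i) * fderiv ℝ φ x (Pi.single i 1) else 0

def HasESO (P : Finset ι → ℝ) (p w : ι → ℝ) (φ : (ι → ℝ) → ℝ) : Prop :=
  ∀ x h : ι → ℝ,
    (∑ T : Finset ι, P T * φ (x + fun i => if i ∈ T then h i else 0))
      ≤ φ x + (∑ i, p i * fderiv ℝ φ x (Pi.single i 1) * h i)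
          + 1 / 2 * ∑ i, (p i * w i) * h i ^ 2

def IsWeightedStronglyConvex (v : ι → ℝ) (γ : ℝ) (φ : (ι → ℝ) → ℝ) : Prop :=
  ∀ x h : ι → ℝ, φ (x + h) ≥ φ x + fderiv ℝ φ x h + γ / 2 * ∑ i, v i * h i ^ 2

lemma neg_sq_div_le_mul_add_mul_sq_s7 {γ v : ℝ} (hγ : 0 < γ) (hv : 0 < v) (g h : ℝ) :
    -(g ^ 2 / (2 * γ * v)) ≤ h * g + γ / 2 * (v * h ^ 2) := by
  have hsq : 0 ≤ (γ * v * h + g) ^ 2 / (2 * γ * v) := by positivity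
  have hexpand : (γ * v * h + g) ^ 2 / (2 * γ * v)
      = h * g + γ / 2 * (v * h ^ 2) + g ^ 2 / (2 * γ * v) := by
    field_simp
    ring
  linarith

variable {φ : (ι → ℝ) → ℝ} {v : ι → ℝ} {γ : ℝ}

lemma sub_le_sum_sq_fderiv_div (hγ : 0 < γ) (hv : ∀ i, 0 < v i)
    (hsc : IsWeightedStronglyConvex v γ φ)
    (x y : ι → ℝ) :
    φ x - φ y ≤ ∑ i, fderiv ℝ φ x (Pi.single i 1) ^ 2 / (2 * γ * v i) := by
  have hy := hsc x (y - x)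
  rw [add_sub_cancel, ContinuousLinearMap.apply_eq_sum_mul_single, mul_sum, add_assoc,
    ← sum_add_distrib] at hy
  have hsq : -∑ i, fderiv ℝ φ x (Pi.single i 1) ^ 2 / (2 * γ * v i)
      ≤ ∑ i, ((y - x) i * fderiv ℝ φ x (Pi.single i 1) + γ / 2 * (v i * (y - x) i ^ 2)) := by
    rw [← sum_neg_distrib]
    exact sum_le_sum fun i _ => neg_sq_div_le_mul_add_mul_sq_s7 hγ (hv i) _ _
  linarith

variable {P : Finset ι → ℝ} {p w : ι → ℝ}

lemma sum_mul_nsyncStep_le (hw : ∀ i, 0 < w i)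
    (hESO : HasESO P p w φ)
    (x : ι → ℝ) :
    ∑ T, P T * φ (nsyncStep w φ x T)
      ≤ φ x - 1 / 2 * ∑ i, p i / w i * fderiv ℝ φ x (Pi.single i 1) ^ 2 := by
  have h := hESO x fun i => -(1 / w i) * fderiv ℝ φ x (Pi.single i 1)
  have hlin : ∑ i, p i * fderiv ℝ φ x (Pi.single i 1) * (-(1 / w i) * fderiv ℝ φ x (Pi.single i 1))
      = -∑ i, p i / w i * fderiv ℝ φ x (Pi.single i 1) ^ 2 := by
    rw [← sum_neg_distrib]
    exact sum_congr rfl fun i _ => by ring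
  have hquad : ∑ i, p i * w i * (-(1 / w i) * fderiv ℝ φ x (Pi.single i 1)) ^ 2
      = ∑ i, p i / w i * fderiv ℝ φ x (Pi.single i 1) ^ 2 :=
    sum_congr rfl fun i _ => by field_simp [(hw i).ne']
  rw [hlin, hquad] at h
  unfold nsyncStep
  linarith

lemma sum_mul_nsyncStep_sub_le (hsum : ∑ T, P T = 1) (hp : ∀ i, 0 < p i)
    (hw : ∀ i, 0 < w i) (hv : ∀ i, 0 < v i) (hγ : 0 < γ)
    (hESO : HasESO P p w φ)
    (hsc : IsWeightedStronglyConvex v γ φ)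
    {Λ : ℝ} (hΛ : 0 < Λ) (hΛi : ∀ i, w i / (p i * v i) ≤ Λ) (x y : ι → ℝ) :
    ∑ T, P T * (φ (nsyncStep w φ x T) - φ y) ≤ (1 - γ / Λ) * (φ x - φ y) := by
  have hdescent := sum_mul_nsyncStep_le hw hESO x
  have hgap := sub_le_sum_sq_fderiv_div hγ hv hsc x y
  set g := fun i => fderiv ℝ φ x (Pi.single i 1)
  have hweights : ∑ i, g i ^ 2 / (2 * γ * v i) ≤ Λ / (2 * γ) * ∑ i, p i / w i * g i ^ 2 := by
    rw [mul_sum]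
    refine sum_le_sum fun i _ => ?_
    have hpi := hp i; have hwi := hw i; have hvi := hv i
    have hfactor :
        g i ^ 2 / (2 * γ * v i) = w i / (p i * v i) * (p i / w i * g i ^ 2) / (2 * γ) := by
      field_simp
    rw [hfactor, div_mul_eq_mul_div Λ]
    gcongr
    exact hΛi i
  have hsplit : ∑ T, P T * (φ (nsyncStep w φ x T) - φ y)
      = ∑ T, P T * φ (nsyncStep w φ x T) - φ y := by
    simp only [mul_sub, sum_sub_distrib, ← sum_mul, hsum, one_mul]
  have hrate : γ / Λ * (φ x - φ y) ≤ 1 / 2 * ∑ i, p i / w i * g i ^ 2 :=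
    calc γ / Λ * (φ x - φ y) ≤ γ / Λ * (Λ / (2 * γ) * ∑ i, p i / w i * g i ^ 2) := by
          gcongr
          exact hgap.trans hweights
      _ = 1 / 2 * ∑ i, p i / w i * g i ^ 2 := by field_simp
  rw [hsplit]
  linarith

end NSyncStep

lemma sum_prod_mul_foldl_le {α β : Type*} [Fintype β] {P : β → ℝ} (hP : ∀ b, 0 ≤ P b)
    (step : α → β → α) (f : α → ℝ) {c : ℝ} (hc : 0 ≤ c)
    (hstep : ∀ x, ∑ b, P b * f (step x b) ≤ c * f x) (k : ℕ) (x : α) :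
    ∑ t : Fin k → β, (∏ j, P (t j)) * f (Fin.foldl k (fun y j => step y (t j)) x)
      ≤ c ^ k * f x := by
  induction k generalizing x with
  | zero => simp
  | succ k ih =>
    rw [← (Fin.consEquiv fun _ => β).sum_comp, Fintype.sum_prod_type]
    simp only [Fin.consEquiv_apply, Fin.prod_univ_succ, Fin.foldl_succ, Fin.cons_zero,
      Fin.cons_succ, mul_assoc, ← mul_sum]
    calc ∑ b, P b * ∑ t : Fin k → β,
          (∏ j, P (t j)) * f (Fin.foldl k (fun y j => step y (t j)) (step x b))
        ≤ ∑ b, P b * (c ^ k * f (step x b)) :=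
          sum_le_sum fun b _ => mul_le_mul_of_nonneg_left (ih _) (hP b)
      _ = c ^ k * ∑ b, P b * f (step x b) := by rw [mul_sum]; exact sum_congr rfl fun b _ => by ring
      _ ≤ c ^ k * (c * f x) := mul_le_mul_of_nonneg_left (hstep x) (pow_nonneg hc k)
      _ = c ^ (k + 1) * f x := by ring

lemma one_sub_pow_mul_le {a C δ : ℝ} (ha : 0 < a) (ha1 : a ≤ 1) (hC : 0 < C) (hδ : 0 < δ) {K : ℕ}
    (hK : a⁻¹ * Real.log (C / δ) ≤ K) : (1 - a) ^ K * C ≤ δ := by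
  have hlog : Real.log (C / δ) ≤ a * K := by
    rwa [inv_mul_le_iff₀ ha] at hK
  calc (1 - a) ^ K * C ≤ Real.exp (-a) ^ K * C := by
        gcongr
        exact Real.one_sub_le_exp_neg a
    _ = C / Real.exp (a * K) := by
        rw [← Real.exp_nat_mul, mul_neg, Real.exp_neg, mul_comm (K : ℝ) a, inv_mul_eq_div]
    _ ≤ C / (C / δ) := by
        gcongr
        calc C / δ = Real.exp (Real.log (C / δ)) := (Real.exp_log (by positivity)).symm
          _ ≤ Real.exp (a * K) := Real.exp_le_exp.mpr hlog
    _ = δ := by field_simp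

lemma sum_filter_lt_le_of_sum_mul_le {α : Type*} [Fintype α] {q g : α → ℝ} (hq : ∀ t, 0 ≤ q t)
    (hg : ∀ t, 0 ≤ g t) {ε ρ : ℝ} (hε : 0 < ε) (h : ∑ t, q t * g t ≤ ε * ρ) :
    ∑ t with ε < g t, q t ≤ ρ := by
  refine le_of_mul_le_mul_left ?_ hε
  calc ε * ∑ t with ε < g t, q t ≤ ∑ t with ε < g t, q t * g t := by
        rw [mul_sum]
        exact sum_le_sum fun t ht => by
          rw [mul_comm]
          exact mul_le_mul_of_nonneg_left (mem_filter.mp ht).2.le (hq t)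
    _ ≤ ∑ t, q t * g t :=
        sum_le_sum_of_subset_of_nonneg (filter_subset _ _) fun t _ _ => mul_nonneg (hq t) (hg t)
    _ ≤ ε * ρ := h

lemma one_sub_le_toReal_measure {Ω : Type*} [MeasurableSpace Ω] {μ : Measure Ω}
    [IsProbabilityMeasure μ] {s : Set Ω} {ρ : ℝ} (hρ : 0 ≤ ρ) (hs : μ sᶜ ≤ ENNReal.ofReal ρ) :
    1 - ρ ≤ (μ s).toReal := by
  have hcover : (1 : ENNReal) ≤ μ s + μ sᶜ := by
    simpa [measure_univ] using measure_union_le (μ := μ) s sᶜ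
  have hcompl : (μ sᶜ).toReal ≤ ρ := by
    simpa [ENNReal.toReal_ofReal hρ] using ENNReal.toReal_mono ENNReal.ofReal_ne_top hs
  have := ENNReal.toReal_mono (by finiteness) hcover
  rw [ENNReal.toReal_add (measure_ne_top _ _) (measure_ne_top _ _)] at this
  simp only [ENNReal.toReal_one] at this
  linarith

lemma measure_forall_eq_eq_prod {Ω β : Type*} [MeasurableSpace Ω] {μ : Measure Ω}
    {S : ℕ → Ω → β} (hind : iIndepFun (m := fun _ => (⊤ : MeasurableSpace β)) S μ) {K : ℕ}
    (t : Fin K → β) :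
    μ {ω | ∀ j : Fin K, S j ω = t j} = ∏ j : Fin K, μ {ω | S j ω = t j} := by
  rw [Set.ofPred_forall]
  exact (hind.precomp (Fin.val_injective (n := K))).meas_iInter
    (s := fun j : Fin K => {ω | S j ω = t j}) fun j => ⟨{t j}, trivial, rfl⟩

lemma one_sub_le_measure_of_sum_prod_mul_le {Ω β : Type*} [MeasurableSpace Ω] {μ : Measure Ω}
    [IsProbabilityMeasure μ] [Fintype β] {P : β → ℝ} (hP : ∀ b, 0 ≤ P b)
    {S : ℕ → Ω → β} (hlaw : ∀ k b, (μ {ω | S k ω = b}).toReal = P b)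
    (hind : iIndepFun (m := fun _ => (⊤ : MeasurableSpace β)) S μ) {K : ℕ}
    {g : (Fin K → β) → ℝ} (hg : ∀ t, 0 ≤ g t) {ε ρ : ℝ} (hε : 0 < ε) (hρ : 0 ≤ ρ)
    (h : ∑ t, (∏ j, P (t j)) * g t ≤ ε * ρ) :
    1 - ρ ≤ (μ {ω | g (fun j => S j ω) ≤ ε}).toReal := by
  have hweight : ∀ t : Fin K → β, 0 ≤ ∏ j, P (t j) := fun t => prod_nonneg fun j _ => hP (t j)
  have hbad := sum_filter_lt_le_of_sum_mul_le hweight hg hε h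
  refine one_sub_le_toReal_measure hρ ?_
  calc μ {ω | g (fun j => S j ω) ≤ ε}ᶜ
      ≤ μ (⋃ t ∈ univ.filter (ε < g ·), {ω | ∀ j : Fin K, S j ω = t j}) := by
        refine measure_mono fun ω hω => Set.mem_iUnion₂.mpr ⟨fun j => S j ω, ?_, fun _ => rfl⟩
        simpa using hω
    _ ≤ ∑ t with ε < g t, μ {ω | ∀ j : Fin K, S j ω = t j} := measure_biUnion_finset_le _ _
    _ = ∑ t with ε < g t, ENNReal.ofReal (∏ j, P (t j)) := by
        refine sum_congr rfl fun t _ => ?_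
        rw [measure_forall_eq_eq_prod hind, ENNReal.ofReal_prod_of_nonneg fun j _ => hP _]
        exact prod_congr rfl fun j _ => by rw [← hlaw, ENNReal.ofReal_toReal (measure_ne_top _ _)]
    _ = ENNReal.ofReal (∑ t with ε < g t, ∏ j, P (t j)) :=
        (ENNReal.ofReal_sum_of_nonneg fun t _ => hweight t).symm
    _ ≤ ENNReal.ofReal ρ := ENNReal.ofReal_le_ofReal hbad

/-- The i.i.d. samplings `Ŝ_k` are modeled as independent random variables
`S k : Ω → Finset (Fin n)`, each with law `P`. -/
theorem nsync_main_complexity_general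
    (n : ℕ) (hn : 0 < n)
    {Ω : Type*} [MeasurableSpace Ω] (μpr : Measure Ω) [IsProbabilityMeasure μpr]
    (P : Finset (Fin n) → ℝ) (hP : ∀ S, 0 ≤ P S)
    (hsum : ∑ S : Finset (Fin n), P S = 1)
    (S : ℕ → Ω → Finset (Fin n))
    (hlaw : ∀ k T, (μpr {ω | S k ω = T}).toReal = P T)
    (hind : ProbabilityTheory.iIndepFun
      (m := fun _ : ℕ => (⊤ : MeasurableSpace (Finset (Fin n)))) S μpr)
    (p : Fin n → ℝ)
    (hp : ∀ i, 0 < p i)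
    (w v : Fin n → ℝ) (hw : ∀ i, 0 < w i) (hv : ∀ i, 0 < v i)
    (φ : (Fin n → ℝ) → ℝ)
    (φstar : ℝ) (xstar : Fin n → ℝ) (hmin : ∀ x, φ xstar ≤ φ x)
    (hφstar : φstar = φ xstar)
    (hESO : ∀ x h : Fin n → ℝ,
      (∑ T : Finset (Fin n), P T * φ (x + fun i => if i ∈ T then h i else 0))
        ≤ φ x + (∑ i, p i * fderiv ℝ φ x (Pi.single i 1) * h i)
            + 1 / 2 * ∑ i, (p i * w i) * h i ^ 2)
    (γ : ℝ) (hγ : 0 < γ)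
    (hsc : ∀ x h : Fin n → ℝ,
      φ (x + h) ≥ φ x + fderiv ℝ φ x h + γ / 2 * ∑ i, v i * h i ^ 2)
    (Λ : ℝ)
    (hΛ : Λ = Finset.univ.sup' (Finset.univ_nonempty_iff.mpr ⟨⟨0, hn⟩⟩)
      (fun i => w i / (p i * v i)))
    (x0 : Fin n → ℝ)
    (X : ℕ → Ω → (Fin n → ℝ))
    (hX0 : ∀ ω, X 0 ω = x0)
    (hXrec : ∀ k ω, X (k + 1) ω = X k ω +
      fun i => if i ∈ S k ω then -(1 / w i) * fderiv ℝ φ (X k ω) (Pi.single i 1) else 0)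
    (ε ρ : ℝ) (hε : 0 < ε) (hεφ : ε < φ x0 - φstar) (hρ0 : 0 < ρ)
    (K : ℕ) (hK : (Λ / γ) * Real.log ((φ x0 - φstar) / (ε * ρ)) ≤ K) :
    1 - ρ ≤ (μpr {ω | φ (X K ω) - φstar ≤ ε}).toReal := by
  subst hφstar
  have hΛi : ∀ i, w i / (p i * v i) ≤ Λ :=
    fun i => hΛ ▸ le_sup' (fun i => w i / (p i * v i)) (mem_univ i)
  have hΛpos : 0 < Λ := (div_pos (hw _) (mul_pos (hp _) (hv _))).trans_le (hΛi ⟨0, hn⟩)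
  have hgap0 : 0 < φ x0 - φ xstar := hε.trans hεφ
  have hgap : ∀ x, 0 ≤ φ x - φ xstar := fun x => sub_nonneg.mpr (hmin x)
  have hcontract := sum_mul_nsyncStep_sub_le hsum hp hw hv hγ hESO hsc hΛpos hΛi
  have hγΛ : γ / Λ ≤ 1 := by
    have := (sum_nonneg fun T _ => mul_nonneg (hP T) (hgap _)).trans (hcontract x0 xstar)
    linarith [(mul_nonneg_iff_of_pos_right hgap0).mp this]
  have hX : ∀ k ω, X k ω = Fin.foldl k (fun x j => nsyncStep w φ x (S j ω)) x0 := by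
    intro k ω
    induction k with
    | zero => exact hX0 ω
    | succ k ih => rw [Fin.foldl_succ_last, hXrec, ih]; rfl
  have hexpect := (sum_prod_mul_foldl_le hP (nsyncStep w φ) (fun x => φ x - φ xstar)
    (sub_nonneg.mpr hγΛ) (fun x => hcontract x xstar) K x0).trans
    (one_sub_pow_mul_le (div_pos hγ hΛpos) hγΛ hgap0 (mul_pos hε hρ0) (by rwa [inv_div]))
  simp_rw [hX]
  exact one_sub_le_measure_of_sum_prod_mul_le hP hlaw hind (fun t => hgap _) hε hρ0.le hexpect

/-- Theorem 1 of the NSync paper: under the ESO and strong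
convexity assumptions, K ≥ (Λ/γ)·log((φ(x⁰)−φ*)/(ερ)) iterations of NSync
suffice to reach an ε-accurate solution with probability at least 1−ρ.
The i.i.d. samplings Ŝ_k are modeled as independent random variables
S k : Ω → Finset (Fin n), each with law P. -/
theorem nsync_main_complexity
    (n : ℕ) (hn : 0 < n)
    {Ω : Type*} [MeasurableSpace Ω] (μpr : Measure Ω) [IsProbabilityMeasure μpr]
    (P : Finset (Fin n) → ℝ) (hP : ∀ S, 0 ≤ P S)
    (hsum : ∑ S : Finset (Fin n), P S = 1)
    (S : ℕ → Ω → Finset (Fin n))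
    (hlaw : ∀ k T, (μpr {ω | S k ω = T}).toReal = P T)
    (hind : ProbabilityTheory.iIndepFun
      (m := fun _ : ℕ => (⊤ : MeasurableSpace (Finset (Fin n)))) S μpr)
    (p : Fin n → ℝ)
    (hpdef : ∀ i, p i = ∑ T ∈ Finset.univ.filter (fun T : Finset (Fin n) => i ∈ T), P T)
    (hp : ∀ i, 0 < p i)
    (w v : Fin n → ℝ) (hw : ∀ i, 0 < w i) (hv : ∀ i, 0 < v i)
    (φ : (Fin n → ℝ) → ℝ) (hφ : Differentiable ℝ φ)
    (φstar : ℝ) (xstar : Fin n → ℝ) (hmin : ∀ x, φ xstar ≤ φ x)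
    (hφstar : φstar = φ xstar)
    (hESO : ∀ x h : Fin n → ℝ,
      (∑ T : Finset (Fin n), P T * φ (x + fun i => if i ∈ T then h i else 0))
        ≤ φ x + (∑ i, p i * fderiv ℝ φ x (Pi.single i 1) * h i)
            + 1 / 2 * ∑ i, (p i * w i) * h i ^ 2)
    (γ : ℝ) (hγ : 0 < γ)
    (hsc : ∀ x h : Fin n → ℝ,
      φ (x + h) ≥ φ x + fderiv ℝ φ x h + γ / 2 * ∑ i, v i * h i ^ 2)
    (Λ : ℝ)
    (hΛ : Λ = Finset.univ.sup' (Finset.univ_nonempty_iff.mpr ⟨⟨0, hn⟩⟩)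
      (fun i => w i / (p i * v i)))
    (x0 : Fin n → ℝ)
    (X : ℕ → Ω → (Fin n → ℝ))
    (hX0 : ∀ ω, X 0 ω = x0)
    (hXrec : ∀ k ω, X (k + 1) ω = X k ω +
      fun i => if i ∈ S k ω then -(1 / w i) * fderiv ℝ φ (X k ω) (Pi.single i 1) else 0)
    (ε ρ : ℝ) (hε : 0 < ε) (hεφ : ε < φ x0 - φstar) (hρ0 : 0 < ρ) (hρ1 : ρ < 1)
    (K : ℕ) (hK : (Λ / γ) * Real.log ((φ x0 - φstar) / (ε * ρ)) ≤ K) :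
    1 - ρ ≤ (μpr {ω | φ (X K ω) - φstar ≤ ε}).toReal :=
  nsync_main_complexity_general n hn μpr P hP hsum S hlaw hind p hp w v hw hv φ φstar xstar hmin
    hφstar hESO γ hγ hsc Λ hΛ x0 X hX0 hXrec ε ρ hε hεφ hρ0 K hK
end

section
/- Suppose for each j = 1,…,c a random set Ŝ_j ⊆ [n] and a function φ satisfy E[φ(x + h_[Ŝ_j])] ≤ φ(x) + (τ/|S_j|)(⟨∇φ(x), h_[S_j]⟩ + (β_j/2)‖h_[S_j]‖_u²) for all x, h, where β_j = 1 + (τ−1)(ω_j−1)/max{1, |S_j|−1} and u > 0. Let Ŝ be the mixture sampling: pick j with probability q_j then draw Ŝ_j. Then E[φ(x + h_[Ŝ])] ≤ φ(x) + ⟨∇φ(x), h⟩_p + (1/2)‖h‖²_{p•w} holds with p_i = ∑_j q_j (τ/|S_j|) δ_{ij} and any w_i ≥ (u_i/p_i)·∑_j q_j (τ/|S_j|) δ_{ij} β_j. -/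
/-!
Averaging the component ESOs with the weights `q j` bounds the mixture expectation by
`φ x + ∑ j q j (τ/|S_j|) (⟨∇φ(x), h_[S_j]⟩ + (β_j/2) ‖h_[S_j]‖²_u)`.
Exchanging the sums over `j` and over `i ∈ S_j` turns the linear term into `⟨∇φ(x), h⟩_p`
and the quadratic term into `(1/2) ∑ i u_i (∑ j q_j (τ/|S_j|) δ_ij β_j) h_i²`, which is at
most `(1/2) ‖h‖²_{p•w}` by the choice of `w`.
-/

open Finset

theorem sum_mul_sum_mem_eq_sum_indicator {ι κ : Type*} [Fintype ι] [Fintype κ]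
    [DecidableEq κ]
    (S : ι → Finset κ) (a : ι → ℝ) (g : κ → ℝ) :
    ∑ j, a j * ∑ i ∈ S j, g i = ∑ i, (∑ j, a j * if i ∈ S j then 1 else 0) * g i := by
  simp_rw [mul_sum, sum_mul, mul_ite, mul_one, mul_zero, ite_mul, zero_mul]
  rw [sum_comm]
  refine sum_congr rfl fun j _ => ?_
  rw [sum_ite_mem, univ_inter]

theorem sum_mixture_mul_le {ι α : Type*} [Fintype ι] [Fintype α]
    (q : ι → ℝ) (hq : ∀ j, 0 ≤ q j) (Q : ι → α → ℝ) (F : α → ℝ) (b : ι → ℝ)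
    (hb : ∀ j, ∑ T, Q j T * F T ≤ b j) :
    ∑ T, (∑ j, q j * Q j T) * F T ≤ ∑ j, q j * b j := by
  calc ∑ T, (∑ j, q j * Q j T) * F T
      = ∑ j, q j * ∑ T, Q j T * F T := by
        simp_rw [sum_mul, mul_sum, mul_assoc]
        exact sum_comm
    _ ≤ ∑ j, q j * b j := sum_le_sum fun j _ => mul_le_mul_of_nonneg_left (hb j) (hq j)

theorem sum_mul_add_mul_sum_mem_eq_sum_indicator {ι κ : Type*} [Fintype ι] [Fintype κ]
    [DecidableEq κ]
    (S : ι → Finset κ) (q a β : ι → ℝ) (hq : ∑ j, q j = 1) (c : ℝ) (g f : κ → ℝ) :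
    ∑ j, q j * (c + a j * ((∑ i ∈ S j, g i) + β j / 2 * ∑ i ∈ S j, f i))
      = c + ∑ i, (∑ j, q j * a j * if i ∈ S j then 1 else 0) * g i
        + 1 / 2 * ∑ i, (∑ j, q j * a j * (if i ∈ S j then 1 else 0) * β j) * f i := by
  have hsplit : ∀ j, q j * (c + a j * ((∑ i ∈ S j, g i) + β j / 2 * ∑ i ∈ S j, f i))
      = q j * c + q j * a j * ∑ i ∈ S j, g i + 1 / 2 * (q j * a j * β j * ∑ i ∈ S j, f i) :=
    fun j => by ring
  simp_rw [hsplit, sum_add_distrib, ← mul_sum, ← sum_mul, hq, one_mul,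
    sum_mul_sum_mem_eq_sum_indicator S (fun j => q j * a j * β j)]
  simp_rw [sum_mul_sum_mem_eq_sum_indicator S, mul_right_comm _ (β _)]

theorem nsync_mixture_eso_general
    (n c τ : ℕ)
    (S : Fin c → Finset (Fin n))
    (q : Fin c → ℝ) (hq : ∀ j, 0 < q j) (hqsum : ∑ j, q j = 1)
    (Pj : Fin c → Finset (Fin n) → ℝ)
    (u : Fin n → ℝ)
    (φ : (Fin n → ℝ) → ℝ)
    (β : Fin c → ℝ)
    (hESOj : ∀ (j : Fin c) (x h : Fin n → ℝ),
      (∑ T : Finset (Fin n), Pj j T * φ (x + fun i => if i ∈ T then h i else 0))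
        ≤ φ x + ((τ : ℝ) / (S j).card) *
            ((∑ i ∈ S j, fderiv ℝ φ x (Pi.single i 1) * h i)
              + β j / 2 * ∑ i ∈ S j, u i * h i ^ 2))
    (P : Finset (Fin n) → ℝ) (hPdef : ∀ T, P T = ∑ j, q j * Pj j T)
    (p : Fin n → ℝ)
    (hpdef : ∀ i, p i = ∑ j, q j * ((τ : ℝ) / (S j).card) * (if i ∈ S j then 1 else 0))
    (hp : ∀ i, 0 < p i)
    (w : Fin n → ℝ)
    (hw : ∀ i, w i ≥ (u i / p i) *
      ∑ j, q j * ((τ : ℝ) / (S j).card) * (if i ∈ S j then 1 else 0) * β j) :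
    ∀ x h : Fin n → ℝ,
      (∑ T : Finset (Fin n), P T * φ (x + fun i => if i ∈ T then h i else 0))
        ≤ φ x + (∑ i, p i * fderiv ℝ φ x (Pi.single i 1) * h i)
            + 1 / 2 * ∑ i, (p i * w i) * h i ^ 2 := by
  intro x h
  have hcoord : ∀ i,
      (∑ j, q j * ((τ : ℝ) / (S j).card) * (if i ∈ S j then 1 else 0) * β j)
        * (u i * h i ^ 2) ≤ p i * w i * h i ^ 2 := fun i => by
    have := hw i
    rw [ge_iff_le, div_mul_eq_mul_div, div_le_iff₀ (hp i)] at this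
    linarith [mul_le_mul_of_nonneg_right this (sq_nonneg (h i))]
  calc (∑ T, P T * φ (x + fun i => if i ∈ T then h i else 0))
      ≤ ∑ j, q j * (φ x + ((τ : ℝ) / (S j).card) *
          ((∑ i ∈ S j, fderiv ℝ φ x (Pi.single i 1) * h i)
            + β j / 2 * ∑ i ∈ S j, u i * h i ^ 2)) := by
        simp_rw [hPdef]
        exact sum_mixture_mul_le q (fun j => (hq j).le) Pj _ _ fun j => hESOj j x h
    _ ≤ φ x + (∑ i, p i * fderiv ℝ φ x (Pi.single i 1) * h i)
          + 1 / 2 * ∑ i, (p i * w i) * h i ^ 2 := by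
        have hlin : ∀ i, (∑ j, q j * ((τ : ℝ) / (S j).card) * if i ∈ S j then 1 else 0)
            * (fderiv ℝ φ x (Pi.single i 1) * h i)
              = p i * fderiv ℝ φ x (Pi.single i 1) * h i :=
          fun i => by rw [hpdef, mul_assoc]
        rw [sum_mul_add_mul_sum_mem_eq_sum_indicator S q _ β hqsum,
          sum_congr rfl fun i _ => hlin i]
        linarith [sum_le_sum fun i (_ : i ∈ univ) => hcoord i]

/-- mixture ESO composition, Theorem 2 of the NSync paper:
if each component sampling Ŝ_j satisfies a τ-nice-type ESO on the set S_j,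
then the mixture sampling satisfies the nonuniform ESO with marginals p and
any stepsize weights w ≥ w*. -/
theorem nsync_mixture_eso
    (n c τ : ℕ)
    (S : Fin c → Finset (Fin n)) (hcover : ∀ i : Fin n, ∃ j, i ∈ S j)
    (ω : Fin c → ℕ)
    (q : Fin c → ℝ) (hq : ∀ j, 0 < q j) (hqsum : ∑ j, q j = 1)
    (Pj : Fin c → Finset (Fin n) → ℝ)
    (hPj : ∀ j T, 0 ≤ Pj j T) (hPjsum : ∀ j, ∑ T : Finset (Fin n), Pj j T = 1)
    (u : Fin n → ℝ) (hu : ∀ i, 0 < u i)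
    (φ : (Fin n → ℝ) → ℝ) (hφ : Differentiable ℝ φ)
    (β : Fin c → ℝ)
    (hβ : ∀ j, β j = 1 + ((τ : ℝ) - 1) * ((ω j : ℝ) - 1) / max 1 (((S j).card : ℝ) - 1))
    (hESOj : ∀ (j : Fin c) (x h : Fin n → ℝ),
      (∑ T : Finset (Fin n), Pj j T * φ (x + fun i => if i ∈ T then h i else 0))
        ≤ φ x + ((τ : ℝ) / (S j).card) *
            ((∑ i ∈ S j, fderiv ℝ φ x (Pi.single i 1) * h i)
              + β j / 2 * ∑ i ∈ S j, u i * h i ^ 2))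
    (P : Finset (Fin n) → ℝ) (hPdef : ∀ T, P T = ∑ j, q j * Pj j T)
    (p : Fin n → ℝ)
    (hpdef : ∀ i, p i = ∑ j, q j * ((τ : ℝ) / (S j).card) * (if i ∈ S j then 1 else 0))
    (hp : ∀ i, 0 < p i)
    (w : Fin n → ℝ)
    (hw : ∀ i, w i ≥ (u i / p i) *
      ∑ j, q j * ((τ : ℝ) / (S j).card) * (if i ∈ S j then 1 else 0) * β j) :
    ∀ x h : Fin n → ℝ,
      (∑ T : Finset (Fin n), P T * φ (x + fun i => if i ∈ T then h i else 0))
        ≤ φ x + (∑ i, p i * fderiv ℝ φ x (Pi.single i 1) * h i)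
            + 1 / 2 * ∑ i, (p i * w i) * h i ^ 2 :=
  nsync_mixture_eso_general n c τ S q hq hqsum Pj u φ β hESOj P hPdef p hpdef hp w hw
end
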